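/- Let μ be a Radon measure on ℝᴸ, k ≥ 1, Λ ≥ 0, and p ∈ ℝᴸ. Suppose the function r ↦ e^{Λr}·μ(B_r(p))/r^k is non-decreasing on (0, R₀) for some R₀ > 0, and suppose there exist points p_j → p and radii t_j → 0 with t_j > 0 such that μ(B_{t_j}(p_j)) ≥ ω_k·t_j^k for all j, such that the same monotonicity holds at each p_j (i.e. r ↦ e^{Λr}μ(B_r(p_j))/r^k is non-decreasing on (0, R₀)), and such that, writing r_j := |p_j − p|, for each fixed small r one has 2t_j ≤ r − r_j for all large j. Then the lower k-dimensional density of μ at p satisfies liminf_{r→0} μ(B_r(p))/(ω_k r^k) ≥ 2^{−k}. -/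

import Mathlib

open Metric MeasureTheory Filter Topology

/-- Boundary density lower bound: if the weighted density ratios of a Radon measure `μ`
are monotone at `p` and at nearby points `p j` with interior density at least `1`
(`μ(B_{t_j}(p_j)) ≥ ω_k t_j^k`), with `t j → 0`, `p j → p` and `2 t j ≤ r − |p_j − p|`
eventually for each small `r`, then the lower `k`-density of `μ` at `p` is at least `2⁻ᵏ`. -/
theorem boundary_density_lower_bound (L k : ℕ) (hk : 1 ≤ k)
    (Λ R₀ : ℝ) (hΛ : 0 ≤ Λ) (hR₀ : 0 < R₀)
    (μ : Measure (EuclideanSpace ℝ (Fin L))) [IsLocallyFiniteMeasure μ]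
    (p : EuclideanSpace ℝ (Fin L)) (pj : ℕ → EuclideanSpace ℝ (Fin L)) (tj : ℕ → ℝ)
    (hmono_p : MonotoneOn
      (fun r => Real.exp (Λ * r) * (μ (ball p r)).toReal / r ^ k) (Set.Ioo 0 R₀))
    (hmono_pj : ∀ j, MonotoneOn
      (fun r => Real.exp (Λ * r) * (μ (ball (pj j) r)).toReal / r ^ k) (Set.Ioo 0 R₀))
    (hpj : Tendsto pj atTop (𝓝 p))
    (htj : Tendsto tj atTop (𝓝 0)) (htjpos : ∀ j, 0 < tj j)
    (hdens : ∀ j,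
      (volume (ball (0 : EuclideanSpace ℝ (Fin k)) 1)).toReal * tj j ^ k
        ≤ (μ (ball (pj j) (tj j))).toReal)
    (hfit : ∀ r : ℝ, 0 < r → r < R₀ →
      ∀ᶠ j in atTop, 2 * tj j ≤ r - dist (pj j) p) :
    ((2 : ℝ)⁻¹) ^ k ≤ Filter.liminf
      (fun r : ℝ => (μ (ball p r)).toReal
        / ((volume (ball (0 : EuclideanSpace ℝ (Fin k)) 1)).toReal * r ^ k))
      (𝓝[>] (0 : ℝ)) := by
  set ω : ℝ := (volume (ball (0 : EuclideanSpace ℝ (Fin k)) 1)).toReal with hωdef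
  have hωpos : 0 < ω := by
    rw [hωdef]
    exact ENNReal.toReal_pos (measure_ball_pos volume 0 one_pos).ne' measure_ball_lt_top.ne
  have hfin : ∀ (q : EuclideanSpace ℝ (Fin L)) (s : ℝ), μ (ball q s) ≠ ⊤ := fun q s =>
    measure_ball_lt_top.ne
  have hμnn : ∀ (q : EuclideanSpace ℝ (Fin L)) (s : ℝ), 0 ≤ (μ (ball q s)).toReal := fun q s =>
    ENNReal.toReal_nonneg
  -- distances to p tend to zero
  have hd0 : Tendsto (fun j => dist (pj j) p) atTop (𝓝 0) :=
    tendsto_iff_dist_tendsto_zero.mp hpj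
  -- Core estimate at every fixed radius r ∈ (0, R₀)
  have key : ∀ r : ℝ, 0 < r → r < R₀ →
      Real.exp (-(Λ * r)) * (ω * r ^ k) ≤ (μ (ball p r)).toReal := by
    intro r hr hrR
    have hev : ∀ᶠ j in atTop,
        Real.exp (-(Λ * r)) * (ω * (r - dist (pj j) p) ^ k) ≤ (μ (ball p r)).toReal := by
      filter_upwards [hfit r hr hrR] with j hj
      set d : ℝ := dist (pj j) p with hd
      set s : ℝ := r - d with hsdef
      have htpos := htjpos j
      have hts : 2 * tj j ≤ s := hj
      have hs0 : 0 < s := lt_of_lt_of_le (by linarith) hts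
      have hsr : s ≤ r := by
        have : (0 : ℝ) ≤ d := dist_nonneg
        linarith
      have htles : tj j ≤ s := by linarith
      have hmem1 : tj j ∈ Set.Ioo (0 : ℝ) R₀ := ⟨htpos, by linarith⟩
      have hmem2 : s ∈ Set.Ioo (0 : ℝ) R₀ := ⟨hs0, by linarith⟩
      have hmono := hmono_pj j hmem1 hmem2 htles
      -- lower bound for the left side of the monotonicity inequality
      have hlhs : ω ≤ Real.exp (Λ * tj j) * (μ (ball (pj j) (tj j))).toReal / tj j ^ k := by
        have h1 : ω * tj j ^ k ≤ (μ (ball (pj j) (tj j))).toReal := hdens j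
        have hexp1 : (1 : ℝ) ≤ Real.exp (Λ * tj j) :=
          Real.one_le_exp (by positivity)
        have htk : (0 : ℝ) < tj j ^ k := by positivity
        rw [le_div_iff₀ htk]
        calc ω * tj j ^ k ≤ (μ (ball (pj j) (tj j))).toReal := h1
          _ = 1 * (μ (ball (pj j) (tj j))).toReal := by ring
          _ ≤ Real.exp (Λ * tj j) * (μ (ball (pj j) (tj j))).toReal :=
              mul_le_mul_of_nonneg_right hexp1 (hμnn _ _)
      have hrhs : ω ≤ Real.exp (Λ * s) * (μ (ball (pj j) s)).toReal / s ^ k :=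
        le_trans hlhs hmono
      -- convert: μ(ball (pj j) s) ≥ exp(-(Λ s)) ω s ^ k
      have hsk : (0 : ℝ) < s ^ k := by positivity
      have h2 : ω * s ^ k ≤ Real.exp (Λ * s) * (μ (ball (pj j) s)).toReal := by
        rw [le_div_iff₀ hsk] at hrhs; linarith
      have h3 : Real.exp (-(Λ * s)) * (ω * s ^ k) ≤ (μ (ball (pj j) s)).toReal := by
        have hep : (0 : ℝ) < Real.exp (Λ * s) := Real.exp_pos _
        rw [Real.exp_neg]
        rw [inv_mul_le_iff₀ hep] at *
        nlinarith [hμnn (pj j) s]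
      -- exp(-(Λ r)) ≤ exp(-(Λ s))
      have h4 : Real.exp (-(Λ * r)) ≤ Real.exp (-(Λ * s)) := by
        apply Real.exp_le_exp.mpr
        have : Λ * s ≤ Λ * r := mul_le_mul_of_nonneg_left hsr hΛ
        linarith
      have h5 : Real.exp (-(Λ * r)) * (ω * s ^ k) ≤ (μ (ball (pj j) s)).toReal :=
        le_trans (mul_le_mul_of_nonneg_right h4 (by positivity)) h3
      -- ball inclusion
      have hsub : ball (pj j) s ⊆ ball p r := ball_subset_ball' (by rw [hsdef]; ring_nf; linarith)
      exact le_trans h5 (ENNReal.toReal_mono (hfin p r) (measure_mono hsub))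
    -- take the limit j → ∞
    have hlim : Tendsto (fun j => Real.exp (-(Λ * r)) * (ω * (r - dist (pj j) p) ^ k))
        atTop (𝓝 (Real.exp (-(Λ * r)) * (ω * r ^ k))) := by
      have h1 : Tendsto (fun j => r - dist (pj j) p) atTop (𝓝 r) := by
        simpa using tendsto_const_nhds.sub hd0
      exact tendsto_const_nhds.mul (tendsto_const_nhds.mul (h1.pow k))
    exact le_of_tendsto hlim hev
  -- eventual lower bound for the density ratio
  have hbound : ∀ᶠ r in 𝓝[>] (0 : ℝ),
      ((2 : ℝ)⁻¹) ^ k ≤ (μ (ball p r)).toReal / (ω * r ^ k) := by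
    have hIoo : Set.Ioo (0 : ℝ) R₀ ∈ 𝓝[>] (0 : ℝ) :=
      Ioo_mem_nhdsGT_of_mem ⟨le_refl 0, hR₀⟩
    have hexp : ∀ᶠ r in 𝓝[>] (0 : ℝ), (2 : ℝ)⁻¹ ≤ Real.exp (-(Λ * r)) := by
      have hc : Tendsto (fun r : ℝ => Real.exp (-(Λ * r))) (𝓝 0) (𝓝 1) := by
        have : Continuous (fun r : ℝ => Real.exp (-(Λ * r))) := by continuity
        simpa using this.tendsto 0
      exact (hc.eventually_const_le (by norm_num)).filter_mono nhdsWithin_le_nhds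
    filter_upwards [hIoo, hexp] with r hr hexpr
    obtain ⟨hr0, hrR⟩ := hr
    have hden : (0 : ℝ) < ω * r ^ k := by positivity
    have h1 : Real.exp (-(Λ * r)) ≤ (μ (ball p r)).toReal / (ω * r ^ k) := by
      rw [le_div_iff₀ hden]
      exact key r hr0 hrR
    have h2 : ((2 : ℝ)⁻¹) ^ k ≤ (2 : ℝ)⁻¹ := by
      have := pow_le_pow_of_le_one (by norm_num : (0:ℝ) ≤ 2⁻¹) (by norm_num : (2:ℝ)⁻¹ ≤ 1) hk
      simpa using this
    linarith
  -- coboundedness: the ratio is eventually bounded above, using monotonicity at p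
  have hcob : IsCoboundedUnder (· ≥ ·) (𝓝[>] (0 : ℝ))
      (fun r : ℝ => (μ (ball p r)).toReal / (ω * r ^ k)) := by
    apply Filter.IsBoundedUnder.isCoboundedUnder_ge
    refine ⟨Real.exp (Λ * (R₀ / 2)) * (μ (ball p (R₀ / 2))).toReal / (R₀ / 2) ^ k / ω, ?_⟩
    have hIoo : Set.Ioo (0 : ℝ) (R₀ / 2) ∈ 𝓝[>] (0 : ℝ) :=
      Ioo_mem_nhdsGT_of_mem ⟨le_refl 0, by linarith⟩
    rw [eventually_map]
    filter_upwards [hIoo] with r hr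
    obtain ⟨hr0, hrhalf⟩ := hr
    have hmem1 : r ∈ Set.Ioo (0 : ℝ) R₀ := ⟨hr0, by linarith⟩
    have hmem2 : R₀ / 2 ∈ Set.Ioo (0 : ℝ) R₀ := ⟨by linarith, by linarith⟩
    have hmono := hmono_p hmem1 hmem2 (le_of_lt hrhalf)
    have hrk : (0 : ℝ) < r ^ k := by positivity
    have hexp1 : (1 : ℝ) ≤ Real.exp (Λ * r) := Real.one_le_exp (by positivity)
    have h1 : (μ (ball p r)).toReal / r ^ k
        ≤ Real.exp (Λ * r) * (μ (ball p r)).toReal / r ^ k := by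
      apply div_le_div_of_nonneg_right ?_ hrk.le
      nlinarith [hμnn p r]
    have h2 : (μ (ball p r)).toReal / (ω * r ^ k)
        = ((μ (ball p r)).toReal / r ^ k) / ω := by
      rw [div_div]; ring_nf
    rw [h2]
    apply div_le_div_of_nonneg_right ?_ hωpos.le
    exact le_trans h1 hmono
  exact Filter.le_liminf_of_le hcob hbound
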